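/- arXiv:2106.01521 — 5 statements merged into one kernel-verified Lean document; each statement's English description precedes it below -/
import Mathlib

section
/- The 12-uniform morphism g2 defined by g2(0)=011220012201, g2(1)=122001120012, g2(2)=200112201120 maps squarefree ternary words to words that are 3-directed: for every squarefree ternary word w of length at most some bound (e.g. all squarefree words of length 4), every factor f of length 3 of g2(w) satisfies that f^R is not a factor of g2(w). -/
/-!
Every factor of length 3 of the image of a word under a 12-uniform morphism lies in the image
of a single letter or of two consecutive letters. A squarefree word has no two equal consecutive
letters, and the length-3 factors of the words `g2 a` and `g2 a ++ g2 b` with `a ≠ b` form a set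
of nine words containing no reversal of one of its members.
-/

/-- The 12-uniform morphism `g2`. -/
def g2 : Fin 3 → List (Fin 3)
  | 0 => [0, 1, 1, 2, 2, 0, 0, 1, 2, 2, 0, 1]
  | 1 => [1, 2, 2, 0, 0, 1, 1, 2, 0, 0, 1, 2]
  | 2 => [2, 0, 0, 1, 1, 2, 2, 0, 1, 1, 2, 0]

/-- A ternary word is squarefree if it contains no nonempty factor `u ++ u`. -/
def Squarefree' {α : Type*} (w : List α) : Prop :=
  ∀ u : List α, u ≠ [] → ¬ (u ++ u) <:+: w

theorem List.infix_flatten_map_of_uniform {α β : Type*} {h : α → List β} {k : ℕ}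
    (hk : ∀ a, (h a).length = k) {f : List β} (hf : f ≠ []) (hfk : f.length ≤ k + 1) :
    ∀ {w : List α}, f <:+: (w.map h).flatten →
      (∃ a ∈ w, f <:+: h a) ∨ ∃ a b, [a, b] <:+: w ∧ f <:+: h a ++ h b
  | [], hfw => absurd (eq_nil_of_infix_nil hfw) hf
  | a :: w, hfw => by
    rw [map_cons, flatten_cons, infix_append_iff_ne_nil] at hfw
    rcases hfw with hfa | hfw | ⟨s, p, hs, hp, rfl, hsa, hpw⟩
    · exact .inl ⟨a, mem_cons_self, hfa⟩
    · rcases infix_flatten_map_of_uniform hk hf hfk hfw with ⟨c, hc, hfc⟩ | ⟨c, d, hcd, hfcd⟩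
      · exact .inl ⟨c, mem_cons_of_mem a hc, hfc⟩
      · exact .inr ⟨c, d, infix_cons hcd, hfcd⟩
    · obtain _ | ⟨b, w⟩ := w
      · exact absurd (eq_nil_of_prefix_nil hpw) hp
      have hpb : p <+: h b := by
        refine prefix_of_prefix_length_le hpw (prefix_append _ _) ?_
        rw [hk]
        rw [length_append] at hfk
        have := length_pos_iff.mpr hs
        omega
      obtain ⟨s', hs'⟩ := hsa
      obtain ⟨p', hp'⟩ := hpb
      exact .inr ⟨a, b, ⟨[], w, rfl⟩, s', p', by simp [← hs', ← hp']⟩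

theorem Squarefree'.not_infix_pair {α : Type*} {w : List α} (hw : Squarefree' w) (a : α) :
    ¬ [a, a] <:+: w :=
  hw [a] (List.cons_ne_nil a [])

theorem length_g2 (a : Fin 3) : (g2 a).length = 12 := by
  fin_cases a <;> rfl

def g2Factors3 : List (List (Fin 3)) :=
  [[0, 0, 1], [0, 1, 1], [0, 1, 2], [1, 1, 2], [1, 2, 0], [1, 2, 2], [2, 0, 0], [2, 0, 1], [2, 2, 0]]

theorem reverse_not_mem_g2Factors3 : ∀ f ∈ g2Factors3, f.reverse ∉ g2Factors3 := by
  decide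

theorem mem_g2Factors3_of_infix_g2 :
    ∀ a x y z : Fin 3, [x, y, z] <:+: g2 a → [x, y, z] ∈ g2Factors3 := by
  decide

theorem mem_g2Factors3_of_infix_g2_append :
    ∀ a b : Fin 3, a ≠ b → ∀ x y z : Fin 3, [x, y, z] <:+: g2 a ++ g2 b →
      [x, y, z] ∈ g2Factors3 := by
  decide

theorem mem_g2Factors3_of_infix {w : List (Fin 3)} (hw : ∀ a, ¬ [a, a] <:+: w)
    {f : List (Fin 3)} (hf : f.length = 3) (hfw : f <:+: (w.map g2).flatten) :
    f ∈ g2Factors3 := by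
  obtain ⟨x, y, z, rfl⟩ := List.length_eq_three.mp hf
  rcases List.infix_flatten_map_of_uniform length_g2 (List.cons_ne_nil _ _) (by simp) hfw with
    ⟨a, -, hfa⟩ | ⟨a, b, hab, hfab⟩
  · exact mem_g2Factors3_of_infix_g2 a x y z hfa
  · exact mem_g2Factors3_of_infix_g2_append a b (fun h => hw a (h ▸ hab)) x y z hfab

theorem stmt_8_general (w : List (Fin 3)) (hw : Squarefree' w) :
    ∀ f : List (Fin 3), f.length = 3 → f <:+: (w.map g2).flatten →
      ¬ f.reverse <:+: (w.map g2).flatten := by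
  intro f hf hfw hrw
  have hpairs := hw.not_infix_pair
  exact reverse_not_mem_g2Factors3 f (mem_g2Factors3_of_infix hpairs hf hfw)
    (mem_g2Factors3_of_infix hpairs (by rw [List.length_reverse, hf]) hrw)

/-- For every squarefree ternary word `w` of length 4, the image `g2(w)` is
3-directed: every factor `f` of length 3 of `g2(w)` has `f.reverse` not a
factor of `g2(w)`. -/
theorem stmt_8 (w : List (Fin 3)) (hw : Squarefree' w) (hlen : w.length = 4) :
    ∀ f : List (Fin 3), f.length = 3 → f <:+: (w.map g2).flatten →
      ¬ f.reverse <:+: (w.map g2).flatten :=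
  stmt_8_general w hw
end

section
/- Let w be a word that is 3-directed and contains no repetition of exponent greater than 19/10 with period at least 2. Then for every factor fs of w with |s| = 1, the palindromic extension f s f^R contains no square of period p ≥ 20 centered to the left of (or at) s. -/
/-!
Write `n = |f|`, so that `s` sits at position `n` of the palindrome `v = f s fᴿ`, and take a
square of period `p ≥ 20` in `v` starting at `i` with centre `i + p ≤ n`.
If the square ends by position `n + 1`, then all of it but at most its last letter lies in
`f s`, a factor of `w`, giving a repetition of length `2p - 1 > 19p/10` there.
Otherwise the square covers positions `n, n+1, n+2`, which `v` mirrors onto `n, n-1, n-2`;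
shifting back by `p`, the factor of `f s` of length 3 at `n - p` is the reverse of the one
at `n - 2`, against 3-directedness.
-/

def DDirected {α : Type*} (d : ℕ) (u : List α) : Prop :=
  ∀ f : List α, f.length = d → f <:+: u → ¬ f.reverse <:+: u

section

variable {α : Type*}

theorem List.IsInfix.exists_getD_add {t w : List α} (h : t <:+: w) (d : α) :
    ∃ o, o + t.length ≤ w.length ∧ ∀ k < t.length, w.getD (o + k) d = t.getD k d := by
  obtain ⟨o, hle, hget⟩ := List.infix_iff_getElem?.mp h
  refine ⟨o, by omega, fun k hk => ?_⟩
  simp [List.getD_eq_getElem?_getD, add_comm o k, hget k hk, List.getElem?_eq_getElem hk]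

theorem List.take_drop_infix (l : List α) (m n : ℕ) : (l.drop n).take m <:+: l :=
  (List.take_prefix m _).isInfix.trans (List.drop_suffix n l).isInfix

theorem DDirected.of_infix {m : ℕ} {u w : List α} (hdir : DDirected m w) (h : u <:+: w) :
    DDirected m u :=
  fun g hg hgu hgu' => hdir g hg (hgu.trans h) (hgu'.trans h)

theorem DDirected.exists_getD_ne {m : ℕ} {w : List α} (hdir : DDirected m w) (d : α) {a b : ℕ}
    (ha : a + m ≤ w.length) (hb : b + m ≤ w.length) :
    ∃ k < m, w.getD (a + k) d ≠ w.getD (b + (m - 1 - k)) d := by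
  by_contra! h
  have hrev : ((w.drop b).take m).reverse = (w.drop a).take m := by
    refine List.ext_getElem (by simp; omega) fun k h₁ h₂ => ?_
    have hmin : min m (w.length - b) = m := by omega
    simp only [List.length_reverse, List.length_take, List.length_drop, hmin] at h₁
    have := h k h₁
    rw [List.getD_eq_getElem _ _ (by omega), List.getD_eq_getElem _ _ (by omega)] at this
    simp [List.getElem_reverse, hmin, this]
  exact hdir _ (by simp; omega) (w.take_drop_infix m b) (hrev ▸ w.take_drop_infix m a)

theorem List.getD_add_eq_getD_sub_of_reverse_eq {l : List α} (hl : l.reverse = l) (d : α) {c k : ℕ}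
    (hc : l.length = 2 * c + 1) (hk : k ≤ c) : l.getD (c + k) d = l.getD (c - k) d := by
  conv_lhs => rw [← hl]
  rw [List.getD_reverse _ (by omega)]
  congr 1; omega

end

/-- Let `w` be a 3-directed word containing no repetition of exponent greater
than `19/10` with period at least `2` (i.e. `w` is `((19/10)^+, 2)`-free).
Then for every factor `f ++ s` of `w` with `|s| = 1`, the palindromic
extension `f ++ s ++ f.reverse` contains no square of period `p ≥ 20` whose
center lies to the left of (or at) the position of `s`. -/
theorem stmt_10 {α : Type*} (dflt : α) (w f s : List α)
    (hdir : DDirected 3 w)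
    (hfree : ∀ i L p, 2 ≤ p → 19 * p < 10 * L → i + L ≤ w.length →
      ¬ (∀ j, j + p < L → w.getD (i + j) dflt = w.getD (i + j + p) dflt))
    (hfac : (f ++ s) <:+: w) (hs : s.length = 1) :
    ¬ ∃ i p, 20 ≤ p ∧ i + 2 * p ≤ (f ++ s ++ f.reverse).length ∧
        i + p ≤ f.length ∧
        ∀ j < p, (f ++ s ++ f.reverse).getD (i + j) dflt =
          (f ++ s ++ f.reverse).getD (i + j + p) dflt := by
  rintro ⟨i, p, hp, -, hip, hsq⟩
  obtain ⟨a, rfl⟩ := List.length_eq_one_iff.mp hs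
  set n := f.length
  have hv_left : ∀ k < n + 1, (f ++ [a] ++ f.reverse).getD k dflt = (f ++ [a]).getD k dflt :=
    fun k hk => List.getD_append _ _ _ _ (by simpa using hk)
  have hv_pal : ∀ k ≤ n, (f ++ [a] ++ f.reverse).getD (n + k) dflt =
      (f ++ [a] ++ f.reverse).getD (n - k) dflt :=
    fun k hk => List.getD_add_eq_getD_sub_of_reverse_eq (by simp) dflt (by simp; omega) hk
  by_cases hshort : i + 2 * p ≤ n + 2
  · obtain ⟨o, ho, hw⟩ := hfac.exists_getD_add dflt
    simp only [List.length_append, List.length_singleton] at ho hw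
    refine hfree (o + i) (min (2 * p) (n + 1 - i)) p (by omega) (by omega) (by omega) fun j hj => ?_
    have := hsq j (by omega)
    rw [hv_left _ (by omega), hv_left _ (by omega)] at this
    rwa [add_assoc, add_assoc, hw _ (by omega), hw _ (by omega)]
  · obtain ⟨k, hk, hne⟩ := (hdir.of_infix hfac).exists_getD_ne dflt (a := n - p) (b := n - 2)
      (by simp; omega) (by simp; omega)
    apply hne
    have := hsq (n - p + k - i) (by omega)
    rw [show i + (n - p + k - i) = n - p + k by omega, show n - p + k + p = n + k by omega,
      hv_pal k (by omega), hv_left _ (by omega), hv_left _ (by omega)] at this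
    rwa [show n - 2 + (3 - 1 - k) = n - k by omega]
end

section
/- If every vertex at distance i from the root of a rooted tree receives color c(i) for some coloring c of the nonnegative integers, then every path in the tree induces a color sequence of the form c(a) c(a-1) … c(m) … c(b-1) c(b) for some m ≤ a, b, i.e., the concatenation of a reversed prefix and a suffix of the level coloring sharing the turning point; consequently, the tree coloring avoids squares of period ≥ k if and only if all words of the form f s f^R (f s a factor of the level word read toward the root, |s| = 1) avoid squares of period ≥ k. -/
/-!
Measured by the distance from the root, the two ends of an edge lie on consecutive levels,
and a vertex has exactly one neighbour on the level below it, its parent. Hence a path that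
has stepped away from the root can never come back, so its level sequence descends to a
turning level `m` and then ascends. In the complete tree `listTree` every such valley with
arms of equal length is realised by a path, and every valley word is a factor of the
symmetric one obtained by lengthening its shorter arm.
-/

/-- The color sequence of a list `l` contains a square of period at least `k`. -/
def HasSquareGE {α : Type*} (k : ℕ) (l : List α) : Prop :=
  ∃ u : List α, k ≤ u.length ∧ (u ++ u) <:+: l

/-- The infinite rooted tree on finite sequences of naturals (root `[]`,
children of `x` are the lists `n :: x`), in which the level of a vertex `x`
is `x.length`, its distance to the root. -/
def listTree : SimpleGraph (List ℕ) :=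
  SimpleGraph.fromRel (fun x y => ∃ n : ℕ, y = n :: x)

open List

/-- The sequence of levels along a path that descends `i` steps to level `m`
and then ascends `j` steps. -/
def valley (m i j : ℕ) : List ℕ :=
  (range' m (i + 1)).reverse ++ range' (m + 1) j

lemma valley_succ_left (m i j : ℕ) : valley m (i + 1) j = (m + i + 1) :: valley m i j := by
  simp [valley, range'_1_concat, Nat.add_assoc]

lemma valley_zero_left (m j : ℕ) : valley m 0 j = m :: range' (m + 1) j := rfl

lemma valley_infix_valley {m i j i' j' : ℕ} (hi : i ≤ i') (hj : j ≤ j') :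
    valley m i j <:+: valley m i' j' := by
  obtain ⟨di, rfl⟩ := Nat.exists_eq_add_of_le hi
  obtain ⟨dj, rfl⟩ := Nat.exists_eq_add_of_le hj
  refine ⟨(range' (m + (i + 1)) di).reverse, range' (m + 1 + j) dj, ?_⟩
  rw [valley, valley, Nat.add_right_comm i di, ← range'_append_1 (s := m) (m := i + 1),
    ← range'_append_1 (s := m + 1) (m := j)]
  simp only [reverse_append, append_assoc]

lemma HasSquareGE.of_infix {α : Type*} {k : ℕ} {l l' : List α} (h : HasSquareGE k l)
    (hl : l <:+: l') : HasSquareGE k l' :=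
  let ⟨u, hu, hinf⟩ := h
  ⟨u, hu, hinf.trans hl⟩

namespace SimpleGraph

variable {V : Type*}

structure IsLevelFunction (G : SimpleGraph V) (ℓ : V → ℕ) : Prop where
  adj : ∀ ⦃x y : V⦄, G.Adj x y → ℓ y = ℓ x + 1 ∨ ℓ x = ℓ y + 1
  parent_unique : ∀ ⦃x y z : V⦄, G.Adj x y → G.Adj x z → ℓ y + 1 = ℓ x → ℓ z + 1 = ℓ x → y = z

namespace IsLevelFunction

variable {G : SimpleGraph V} {ℓ : V → ℕ}

/-- Once a path has stepped away from the root it can never turn back, since the only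
neighbour one level down is the vertex it came from. -/
lemma map_support_eq_range'_of_isPath_cons (hℓ : G.IsLevelFunction ℓ) {u w v : V}
    (h : G.Adj u w) (q : G.Walk w v) (hp : (Walk.cons h q).IsPath) (hup : ℓ w = ℓ u + 1) :
    ∃ j, ℓ v = ℓ w + j ∧ q.support.map ℓ = range' (ℓ w) (j + 1) := by
  induction q generalizing u with
  | nil => exact ⟨0, rfl, rfl⟩
  | @cons w y v h' q ih =>
    have hy : ℓ y = ℓ w + 1 := by
      refine (hℓ.adj h').resolve_right fun hdown => ?_
      have : y = u := hℓ.parent_unique h' h.symm hdown.symm hup.symm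
      subst this
      simp at hp
    obtain ⟨j, hv, hq⟩ := ih h' hp.of_cons hy
    refine ⟨j + 1, by omega, ?_⟩
    rw [Walk.support_cons, map_cons, hq, hy, range'_succ (s := ℓ w)]

lemma exists_map_support_eq_valley (hℓ : G.IsLevelFunction ℓ) {u v : V} (p : G.Walk u v)
    (hp : p.IsPath) : ∃ m i j, ℓ u = m + i ∧ ℓ v = m + j ∧ p.support.map ℓ = valley m i j := by
  induction p with
  | nil => exact ⟨_, 0, 0, rfl, rfl, rfl⟩
  | @cons u w v h q ih =>
    rcases hℓ.adj h with hup | hdown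
    · obtain ⟨j, hv, hq⟩ := hℓ.map_support_eq_range'_of_isPath_cons h q hp hup
      refine ⟨ℓ u, 0, j + 1, rfl, by omega, ?_⟩
      rw [Walk.support_cons, map_cons, hq, valley_zero_left, hup]
    · obtain ⟨m, i, j, hw, hv, hq⟩ := ih hp.of_cons
      refine ⟨m, i + 1, j, by omega, hv, ?_⟩
      rw [Walk.support_cons, map_cons, hq, valley_succ_left, hdown, hw]

end IsLevelFunction

end SimpleGraph

namespace SimpleGraph.IsTree

variable {V : Type*} {T : SimpleGraph V}

lemma length_eq_dist_of_isPath (hT : T.IsTree) {u v : V} {p : T.Walk u v} (hp : p.IsPath) :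
    p.length = T.dist u v := by
  obtain ⟨q, hq, hql⟩ := hT.connected.exists_path_of_dist u v
  rw [(hT.existsUnique_path u v).unique hp hq, hql]

lemma dist_eq_add_one_of_mem_support (hT : T.IsTree) {r x y : V} {p : T.Walk r y}
    (hp : p.IsPath) (hxy : T.Adj x y) (hx : x ∈ p.support) :
    T.dist r y = T.dist r x + 1 := by
  obtain ⟨q, hq, hql⟩ := hT.connected.exists_path_of_dist r x
  rw [← hT.length_eq_dist_of_isPath hp, hT.isAcyclic.path_concat hq hp hxy hx,
    Walk.length_concat, hql]

lemma mem_support_of_adj_of_dist_add_one (hT : T.IsTree) {r x y : V} {p : T.Walk r x}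
    (hp : p.IsPath) (hxy : T.Adj x y) (hy : T.dist r y + 1 = T.dist r x) : y ∈ p.support := by
  obtain ⟨q, hq, -⟩ := hT.connected.exists_path_of_dist r y
  refine hT.isAcyclic.mem_support_of_ne_mem_support_of_adj_of_isPath hp hq hxy fun hx => ?_
  have := hT.dist_eq_add_one_of_mem_support hq hxy hx
  omega

lemma isLevelFunction_dist (hT : T.IsTree) (r : V) : T.IsLevelFunction (T.dist r) where
  adj x y hxy := by
    obtain ⟨p, hp, -⟩ := hT.connected.exists_path_of_dist r y
    by_cases hx : x ∈ p.support
    · exact Or.inl (hT.dist_eq_add_one_of_mem_support hp hxy hx)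
    · obtain ⟨q, hq, -⟩ := hT.connected.exists_path_of_dist r x
      exact Or.inr (hT.dist_eq_add_one_of_mem_support hq hxy.symm
        (hT.isAcyclic.mem_support_of_ne_mem_support_of_adj_of_isPath hq hp hxy hx))
  parent_unique x y z hxy hxz hy hz := by
    obtain ⟨p, hp, -⟩ := hT.connected.exists_path_of_dist r x
    rw [hT.isAcyclic.eq_penultimate_of_adj_end hp hxy
        (hT.mem_support_of_adj_of_dist_add_one hp hxy hy),
      hT.isAcyclic.eq_penultimate_of_adj_end hp hxz
        (hT.mem_support_of_adj_of_dist_add_one hp hxz hz)]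

end SimpleGraph.IsTree

namespace listTree

open SimpleGraph

lemma adj_iff {x y : List ℕ} : listTree.Adj x y ↔ (∃ n, y = n :: x) ∨ ∃ n, x = n :: y := by
  rw [listTree, fromRel_adj, and_iff_right_iff_imp]
  rintro (⟨n, rfl⟩ | ⟨n, rfl⟩) <;> simp

lemma adj_cons (n : ℕ) (x : List ℕ) : listTree.Adj (n :: x) x :=
  adj_iff.2 (.inr ⟨n, rfl⟩)

lemma isLevelFunction_length : listTree.IsLevelFunction length where
  adj x y h := by rcases adj_iff.1 h with ⟨n, rfl⟩ | ⟨n, rfl⟩ <;> simp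
  parent_unique x y z hxy hxz hy hz := by
    rcases adj_iff.1 hxy with ⟨n, rfl⟩ | ⟨n, rfl⟩
    · simp only [length_cons] at hy; omega
    rcases adj_iff.1 hxz with ⟨n', rfl⟩ | ⟨n', hn'⟩
    · simp only [length_cons] at hz; omega
    exact (cons.inj hn').2

def walkDrop (x : List ℕ) : (l : List ℕ) → listTree.Walk (l ++ x) x
  | [] => .nil
  | n :: l => .cons (adj_cons n (l ++ x)) (walkDrop x l)

lemma support_walkDrop (x l : List ℕ) : (walkDrop x l).support = l.tails.map (· ++ x) := by
  induction l with
  | nil => rfl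
  | cons n l ih => simp [walkDrop, ih]

lemma map_length_support_walkDrop (x l : List ℕ) :
    (walkDrop x l).support.map length = (range' x.length (l.length + 1)).reverse := by
  induction l with
  | nil => rfl
  | cons n l ih =>
    rw [walkDrop, Walk.support_cons, map_cons, ih, length_cons,
      range'_1_concat (n := l.length + 1)]
    simp only [reverse_append, reverse_singleton, singleton_append, length_append, length_cons]
    congr 1
    omega

lemma isPath_walkDrop (x l : List ℕ) : (walkDrop x l).IsPath := by
  refine Walk.IsPath.mk' (Nodup.of_map length ?_)
  rw [map_length_support_walkDrop]
  exact nodup_reverse.2 nodup_range'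

/-- The two arms of the `V` consist of all-zero lists and of lists containing a `1`
respectively, so they are disjoint. -/
lemma exists_isPath_map_length_support_eq_valley (m n : ℕ) :
    ∃ (u v : List ℕ) (p : listTree.Walk u v), p.IsPath ∧ p.support.map length = valley m n n := by
  cases n with
  | zero => exact ⟨_, _, .nil (u := replicate m 0), .nil, by simp [valley]⟩
  | succ n =>
    set x := replicate m 0
    let p := (walkDrop x (replicate (n + 1) 0)).append
      (.cons (adj_cons 1 x).symm (walkDrop (1 :: x) (replicate n 0)).reverse)
    have hsupport : p.support = (walkDrop x (replicate (n + 1) 0)).support ++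
        (walkDrop (1 :: x) (replicate n 0)).support.reverse := by
      simp [p, Walk.support_append]
    refine ⟨_, _, p, Walk.IsPath.mk' ?_, ?_⟩
    · rw [hsupport, nodup_append]
      refine ⟨(isPath_walkDrop _ _).support_nodup,
        nodup_reverse.2 (isPath_walkDrop _ _).support_nodup, ?_⟩
      simp only [support_walkDrop, mem_reverse, mem_map, mem_tails]
      rintro _ ⟨s, hs, rfl⟩ _ ⟨t, -, rfl⟩ h
      have h1 : 1 ∈ s ++ x := h ▸ by simp
      simp only [x, mem_append, mem_replicate, one_ne_zero, and_false, or_false] at h1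
      simpa using hs.subset h1
    · rw [hsupport, map_append, map_reverse, map_length_support_walkDrop,
        map_length_support_walkDrop]
      simp [x, valley]

end listTree

/-- If every vertex at distance `i` from the root of a tree gets color `c i`,
then (first part) every path induces a color sequence obtained by reading the
level coloring down from level `a` to a turning level `m` and back up to level
`b`; consequently (second part, stated for the complete infinite tree
`listTree`, where the level of a vertex is its list length), the tree coloring
avoids squares of period `≥ k` if and only if all palindromic extensions
`f ++ s ++ f.reverse` (with `f ++ s` a factor of the level word read toward
the root and `|s| = 1`) avoid squares of period `≥ k`. -/
theorem stmt_11 {α : Type*} (c : ℕ → α) :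
    (∀ (V : Type) (T : SimpleGraph V), T.IsTree → ∀ (r u v : V)
        (p : T.Walk u v), p.IsPath →
      ∃ m, m ≤ T.dist r u ∧ m ≤ T.dist r v ∧
        p.support.map (fun x => c (T.dist r x)) =
          ((List.range' m (T.dist r u - m + 1)).map c).reverse ++
            (List.range' (m + 1) (T.dist r v - m)).map c) ∧
    (∀ k : ℕ,
      (∀ (u v : List ℕ) (p : listTree.Walk u v), p.IsPath →
          ¬ HasSquareGE k (p.support.map (fun x => c x.length))) ↔
      (∀ a m : ℕ, m ≤ a →
          ¬ HasSquareGE k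
            (((List.range' (m + 1) (a - m)).map c).reverse ++ [c m] ++
              (((List.range' (m + 1) (a - m)).map c).reverse).reverse))) := by
  have map_valley_self (m n : ℕ) : (valley m n n).map c = ((range' (m + 1) n).map c).reverse ++
      [c m] ++ (((range' (m + 1) n).map c).reverse).reverse := by
    simp [valley, range'_succ]
  refine ⟨fun V T hT r u v p hp => ?_, fun k => ⟨fun hpaths a m hma => ?_, fun hV u v p hp => ?_⟩⟩
  · obtain ⟨m, i, j, hu, hv, hp⟩ := (hT.isLevelFunction_dist r).exists_map_support_eq_valley p hp
    refine ⟨m, by omega, by omega, ?_⟩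
    rw [← Function.comp_def c, ← map_map, hp, hu, hv, Nat.add_sub_cancel_left,
      Nat.add_sub_cancel_left, valley, map_append, map_reverse]
  · obtain ⟨n, rfl⟩ := Nat.exists_eq_add_of_le hma
    obtain ⟨u, v, p, hp, hlevels⟩ := listTree.exists_isPath_map_length_support_eq_valley m n
    have := hpaths u v p hp
    rwa [← Function.comp_def c, ← map_map, hlevels, map_valley_self,
      ← Nat.add_sub_cancel_left m n] at this
  · obtain ⟨m, i, j, -, -, hlevels⟩ :=
      listTree.isLevelFunction_length.exists_map_support_eq_valley p hp
    intro hsquare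
    refine hV (m + max i j) m (by omega) ?_
    rw [Nat.add_sub_cancel_left, ← map_valley_self]
    rw [← Function.comp_def c, ← map_map, hlevels] at hsquare
    exact hsquare.of_infix ((valley_infix_valley (le_max_left i j) (le_max_right i j)).map c)
end

section
/- π_1(tree) ≥ 4: there exists a finite tree T such that every 3-coloring of the vertices of T contains a path whose color sequence is a square uu with u nonempty. -/
/-!
Take the complete binary tree of depth 7 in heap numbering: the children of `i` are `2i+1` and
`2i+2`, i.e. `j` is a child of `i` iff `(j+1)/2 = i+1`. Suppose it had a nonrepetitive colouring
with three colours. If two siblings `s, s'` with parent `x` share a colour, every child `y` of `s`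
avoids `c s` and (because of the path `y s x s'`) `c x`, so the children of `s` share the third
colour. Iterating this four levels down forces colours of period 3 along a path of six vertices,
a square. Hence siblings near the root get distinct colours, so such a vertex has a child of each
colour other than its own. For the root `r` with children `a, b`, pick a child `y` of `b` coloured
like `a`, a child `x` of `a` coloured like `b` and a child `z` of `x` coloured like `r`: the path
`z x a r b y` is a square.
-/

open SimpleGraph

namespace SimpleGraph

variable {V α : Type*} {G : SimpleGraph V} {c : V → α}

def IsNonrepetitiveColoring (G : SimpleGraph V) (c : V → α) : Prop :=
  ∀ ⦃u v : V⦄ (p : G.Walk u v), p.IsPath → ∀ w : List α, w ≠ [] → p.support.map c ≠ w ++ w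

namespace IsNonrepetitiveColoring

theorem map_ne_append_self (hc : G.IsNonrepetitiveColoring c) {l : List V}
    (hl : l.IsChain G.Adj) (hnd : l.Nodup) {w : List α} (hw : w ≠ []) : l.map c ≠ w ++ w := by
  intro h
  have hne : l ≠ [] := by rintro rfl; simp_all
  exact hc (Walk.ofSupport l hne hl) (by rwa [Walk.isPath_def, Walk.support_ofSupport]) w hw
    (by rwa [Walk.support_ofSupport])

theorem ne_of_adj (hc : G.IsNonrepetitiveColoring c) {u v : V} (h : G.Adj u v) : c u ≠ c v :=
  fun he => hc.map_ne_append_self (l := [u, v]) (by simpa) (by simpa using h.ne) (w := [c u])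
    (by simp) (by simp [he])

end IsNonrepetitiveColoring

end SimpleGraph

theorem eq_of_ne_of_ne_of_card_le_three {α : Type*} [Fintype α] (hα : Fintype.card α ≤ 3)
    {a b x y : α} (hab : a ≠ b) (hxa : x ≠ a) (hxb : x ≠ b) (hya : y ≠ a) (hyb : y ≠ b) :
    x = y := by
  classical
  by_contra hxy
  have h4 : ({a, b, x, y} : Finset α).card = 4 := by
    rw [Finset.card_insert_of_notMem, Finset.card_insert_of_notMem, Finset.card_pair hxy] <;>
      simp [*, Ne.symm]
  have := Finset.card_le_univ ({a, b, x, y} : Finset α)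
  omega

def heapTree (n : ℕ) : SimpleGraph (Fin n) where
  Adj i j := ((j : ℕ) + 1) / 2 = (i : ℕ) + 1 ∨ ((i : ℕ) + 1) / 2 = (j : ℕ) + 1
  symm := ⟨fun _ _ => Or.symm⟩
  loopless := ⟨fun _ h => by omega⟩

theorem heapTree_adj {n : ℕ} {i j : Fin n} :
    (heapTree n).Adj i j ↔ ((j : ℕ) + 1) / 2 = (i : ℕ) + 1 ∨ ((i : ℕ) + 1) / 2 = (j : ℕ) + 1 :=
  Iff.rfl

theorem heapTree_reachable_zero {n : ℕ} (i : Fin n) : (heapTree n).Reachable i ⟨0, i.pos⟩ := by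
  obtain ⟨k, hk⟩ := i
  induction k using Nat.strong_induction_on with
  | _ k ih =>
    rcases k with _ | k
    · rfl
    · have hadj : (heapTree n).Adj ⟨k + 1, hk⟩ ⟨k / 2, by omega⟩ := by
        simp only [heapTree_adj]; omega
      exact hadj.reachable.trans (ih _ (by omega) _)

theorem heapTree_connected {n : ℕ} (hn : 0 < n) : (heapTree n).Connected :=
  (connected_iff_exists_forall_reachable _).mpr ⟨⟨0, hn⟩, fun v => (heapTree_reachable_zero v).symm⟩

-- the binary expansion of `x + 1` extends that of `w + 1`
def heapSubtree {n : ℕ} (w : Fin n) : Set (Fin n) :=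
  {x | ∃ k, ((x : ℕ) + 1) / 2 ^ k = (w : ℕ) + 1}

theorem heapSubtree_eq_and_parent_of_adj {n : ℕ} {w x y : Fin n} (hx : x ∈ heapSubtree w)
    (hxy : (heapTree n).Adj x y) (hy : y ∉ heapSubtree w) :
    x = w ∧ ((w : ℕ) + 1) / 2 = (y : ℕ) + 1 := by
  obtain ⟨k, hk⟩ := hx
  have hdiv : ∀ m j : ℕ, m / 2 ^ (j + 1) = m / 2 / 2 ^ j := fun m j => by
    rw [Nat.div_div_eq_div_mul, pow_succ']
  rcases heapTree_adj.mp hxy with hxy | hxy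
  · exact absurd ⟨k + 1, by rw [hdiv, hxy, hk]⟩ hy
  · rcases k with _ | k
    · rw [pow_zero, Nat.div_one, add_left_inj] at hk
      exact ⟨Fin.ext hk, hk ▸ hxy⟩
    · exact absurd ⟨k, by rw [← hk, hdiv, hxy]⟩ hy

theorem heapTree_isAcyclic (n : ℕ) : (heapTree n).IsAcyclic := by
  refine isAcyclic_iff_forall_adj_isBridge.mpr fun v w hadj => ?_
  wlog hvw : ((w : ℕ) + 1) / 2 = (v : ℕ) + 1 generalizing v w
  · rw [Sym2.eq_swap]
    exact this w v hadj.symm (hadj.resolve_left hvw)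
  refine isBridge_iff_forall_walk_mem_edges.mpr fun p => ?_
  have hv : v ∉ heapSubtree w := by
    rintro ⟨k, hk⟩
    have := Nat.div_le_self ((v : ℕ) + 1) (2 ^ k)
    omega
  obtain ⟨d, hd, hx, hy⟩ := p.reverse.exists_boundary_dart (heapSubtree w) ⟨0, by simp⟩ hv
  obtain ⟨hdw, hwd⟩ := heapSubtree_eq_and_parent_of_adj hx d.adj hy
  have hdv : d.snd = v := Fin.ext (by omega)
  have hedge : d.edge = s(w, v) := by simp [Dart.edge, ← hdw, ← hdv]
  have := List.mem_map_of_mem (f := Dart.edge) hd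
  rwa [← Walk.edges_eq_map_darts, hedge, Walk.edges_reverse, List.mem_reverse,
    Sym2.eq_swap] at this

theorem heapTree_isTree {n : ℕ} (hn : 0 < n) : (heapTree n).IsTree :=
  ⟨heapTree_connected hn, heapTree_isAcyclic n⟩

section HeapColoring

variable {n : ℕ} {α : Type*} [Fintype α] {c : Fin n → α}

theorem heapTree_children_color_eq_of_siblings_color_eq
    (hc : (heapTree n).IsNonrepetitiveColoring c) (hα : Fintype.card α ≤ 3)
    {x s s' y y' : Fin n} (hs : (s : ℕ) = 2 * x + 1) (hs' : (s' : ℕ) = 2 * x + 2)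
    (hy : (y : ℕ) = 2 * s + 1) (hy' : (y' : ℕ) = 2 * s + 2) (heq : c s = c s') :
    c y = c y' ∧ c y ≠ c s ∧ c y ≠ c x := by
  have hfresh : ∀ z : Fin n, (z : ℕ) = 2 * s + 1 ∨ (z : ℕ) = 2 * s + 2 → c z ≠ c s ∧ c z ≠ c x :=
    fun z hz => ⟨hc.ne_of_adj (by simp only [heapTree_adj]; omega), fun h =>
      hc.map_ne_append_self (l := [z, s, x, s']) (by simp [heapTree_adj]; omega)
        (by simp [Fin.ext_iff]; omega) (w := [c x, c s]) (by simp) (by simp [h, heq])⟩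
  obtain ⟨hys, hyx⟩ := hfresh y (.inl hy)
  obtain ⟨hys', hyx'⟩ := hfresh y' (.inr hy')
  have hxs : c x ≠ c s := hc.ne_of_adj (by simp only [heapTree_adj]; omega)
  exact ⟨eq_of_ne_of_ne_of_card_le_three hα hxs hyx hys hyx' hys', hys, hyx⟩

theorem heapTree_siblings_color_ne
    (hc : (heapTree n).IsNonrepetitiveColoring c) (hα : Fintype.card α ≤ 3)
    {u s s' : Fin n} (hu : 32 * (u : ℕ) + 32 < n) (hs : (s : ℕ) = 2 * u + 1)
    (hs' : (s' : ℕ) = 2 * u + 2) : c s ≠ c s' := by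
  intro heq
  obtain ⟨v2, hv2⟩ : ∃ z : Fin n, (z : ℕ) = 4 * u + 3 := ⟨⟨_, by omega⟩, rfl⟩
  obtain ⟨t2, ht2⟩ : ∃ z : Fin n, (z : ℕ) = 4 * u + 4 := ⟨⟨_, by omega⟩, rfl⟩
  obtain ⟨v3, hv3⟩ : ∃ z : Fin n, (z : ℕ) = 8 * u + 7 := ⟨⟨_, by omega⟩, rfl⟩
  obtain ⟨t3, ht3⟩ : ∃ z : Fin n, (z : ℕ) = 8 * u + 8 := ⟨⟨_, by omega⟩, rfl⟩
  obtain ⟨v4, hv4⟩ : ∃ z : Fin n, (z : ℕ) = 16 * u + 15 := ⟨⟨_, by omega⟩, rfl⟩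
  obtain ⟨t4, ht4⟩ : ∃ z : Fin n, (z : ℕ) = 16 * u + 16 := ⟨⟨_, by omega⟩, rfl⟩
  obtain ⟨v5, hv5⟩ : ∃ z : Fin n, (z : ℕ) = 32 * u + 31 := ⟨⟨_, by omega⟩, rfl⟩
  obtain ⟨t5, ht5⟩ : ∃ z : Fin n, (z : ℕ) = 32 * u + 32 := ⟨⟨_, by omega⟩, rfl⟩
  obtain ⟨e2, h21, h20⟩ := heapTree_children_color_eq_of_siblings_color_eq hc hα
    (y := v2) (y' := t2) hs hs' (by omega) (by omega) heq
  obtain ⟨e3, h32, h31⟩ := heapTree_children_color_eq_of_siblings_color_eq hc hα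
    (x := s) (y := v3) (y' := t3) (by omega) (by omega) (by omega) (by omega) e2
  obtain ⟨e4, h43, h42⟩ := heapTree_children_color_eq_of_siblings_color_eq hc hα
    (x := v2) (y := v4) (y' := t4) (by omega) (by omega) (by omega) (by omega) e3
  obtain ⟨-, h54, h53⟩ := heapTree_children_color_eq_of_siblings_color_eq hc hα
    (x := v3) (y := v5) (y' := t5) (by omega) (by omega) (by omega) (by omega) e4
  have h10 : c s ≠ c u := hc.ne_of_adj (by simp only [heapTree_adj]; omega)
  -- three consecutive colours along `u, s, v2, …, v5` are distinct, so they repeat with period 3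
  have p3 := eq_of_ne_of_ne_of_card_le_three hα h21.symm h31 h32 h10.symm h20.symm
  have p4 := eq_of_ne_of_ne_of_card_le_three hα h32.symm h42 h43 h21.symm h31.symm
  have p5 := eq_of_ne_of_ne_of_card_le_three hα h43.symm h53 h54 h32.symm h42.symm
  exact hc.map_ne_append_self (l := [u, s, v2, v3, v4, v5]) (by simp [heapTree_adj]; omega)
    (by simp [Fin.ext_iff]; omega) (w := [c u, c s, c v2]) (by simp) (by simp [p3, p4, p5])

theorem heapTree_exists_child_color_eq
    (hc : (heapTree n).IsNonrepetitiveColoring c) (hα : Fintype.card α ≤ 3)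
    {u : Fin n} (hu : 32 * (u : ℕ) + 32 < n) {a : α} (ha : a ≠ c u) :
    ∃ s : Fin n, ((s : ℕ) = 2 * u + 1 ∨ (s : ℕ) = 2 * u + 2) ∧ c s = a := by
  by_contra! h
  obtain ⟨s, hs⟩ : ∃ z : Fin n, (z : ℕ) = 2 * u + 1 := ⟨⟨_, by omega⟩, rfl⟩
  obtain ⟨s', hs'⟩ : ∃ z : Fin n, (z : ℕ) = 2 * u + 2 := ⟨⟨_, by omega⟩, rfl⟩
  exact heapTree_siblings_color_ne hc hα hu hs hs' <|
    eq_of_ne_of_ne_of_card_le_three hα ha (h s (.inl hs))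
      (hc.ne_of_adj (by simp only [heapTree_adj]; omega)) (h s' (.inr hs'))
      (hc.ne_of_adj (by simp only [heapTree_adj]; omega))

theorem heapTree_not_isNonrepetitiveColoring (hα : Fintype.card α ≤ 3) (hn : 255 ≤ n) :
    ¬ (heapTree n).IsNonrepetitiveColoring c := by
  intro hc
  obtain ⟨z0, hz0⟩ : ∃ z : Fin n, (z : ℕ) = 0 := ⟨⟨_, by omega⟩, rfl⟩
  obtain ⟨z1, hz1⟩ : ∃ z : Fin n, (z : ℕ) = 1 := ⟨⟨_, by omega⟩, rfl⟩
  obtain ⟨z2, hz2⟩ : ∃ z : Fin n, (z : ℕ) = 2 := ⟨⟨_, by omega⟩, rfl⟩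
  have h12 : c z1 ≠ c z2 :=
    heapTree_siblings_color_ne hc hα (u := z0) (by omega) (by omega) (by omega)
  obtain ⟨y, hy, hcy⟩ := heapTree_exists_child_color_eq hc hα (u := z2) (by omega) h12
  obtain ⟨x1, hx1, hcx1⟩ := heapTree_exists_child_color_eq hc hα (u := z1) (by omega) h12.symm
  have h02 : c z0 ≠ c x1 := hcx1 ▸ hc.ne_of_adj (by simp only [heapTree_adj]; omega)
  obtain ⟨x2, hx2, hcx2⟩ := heapTree_exists_child_color_eq hc hα (u := x1) (by omega) h02
  exact hc.map_ne_append_self (l := [x2, x1, z1, z0, z2, y]) (by simp [heapTree_adj]; omega)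
    (by simp [Fin.ext_iff]; omega) (w := [c z0, c z2, c z1]) (by simp) (by simp [hcx1, hcx2, hcy])

end HeapColoring

/-- `π_1(tree) ≥ 4`: there exists a finite tree `T` such that every 3-coloring
of the vertices of `T` contains a path whose color sequence is a square
`u ++ u` with `u` nonempty. -/
theorem stmt_13 :
    ∃ (n : ℕ) (T : SimpleGraph (Fin n)), T.IsTree ∧
      ∀ c : Fin n → Fin 3, ∃ (u v : Fin n) (p : T.Walk u v), p.IsPath ∧
        ∃ w : List (Fin 3), w ≠ [] ∧ p.support.map c = w ++ w := by
  refine ⟨255, heapTree 255, heapTree_isTree (by norm_num), fun c => ?_⟩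
  by_contra! h
  exact heapTree_not_isNonrepetitiveColoring (c := c) (by simp) le_rfl
    fun u v p hp w hw => h u v p hp w hw
end

section
/- Let H be a graph with nonrepetitive chromatic number π(H), and construct G as follows: take a matching a_1b_1, …, a_{1000}b_{1000}; for each matching vertex x attach a copy H_x of H with x adjacent to all vertices of H_x; add adjacent vertices c, d each adjacent to all 2000 matching vertices. If π(H) + 3 ≤ 15, then π(G) ≥ π(H) + 4. -/
/-- A coloring `c` of a graph `G` is nonrepetitive if no path of `G` induces a
color sequence of the form `w ++ w` with `w` nonempty. -/
def Nonrepetitive {V α : Type*} (G : SimpleGraph V) (c : V → α) : Prop :=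
  ∀ (u v : V) (p : G.Walk u v), p.IsPath →
    ∀ w : List α, p.support.map c = w ++ w → w = []

/-- The graph of Lemma `plus4`: a matching `a_i b_i` for `i < 1000` (vertices
`.inl (i, false)` and `.inl (i, true)`); for each matching vertex `x` a copy
`H_x` of `H` with `x` joined to all of `H_x`; and two adjacent vertices `c, d`
(the `.inr (.inr _)` vertices) joined to all matching vertices. -/
def plus4Graph {VH : Type*} (H : SimpleGraph VH) :
    SimpleGraph ((Fin 1000 × Bool) ⊕ (((Fin 1000 × Bool) × VH) ⊕ Fin 2)) :=
  SimpleGraph.fromRel (fun x y =>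
    match x, y with
    | .inl (i, b), .inl (j, b') => i = j ∧ b ≠ b'
    | .inl m, .inr (.inl (m', _)) => m = m'
    | .inr (.inl (m, h)), .inr (.inl (m', h')) => m = m' ∧ H.Adj h h'
    | .inl _, .inr (.inr _) => True
    | .inr (.inr i), .inr (.inr j) => i ≠ j
    | _, _ => False)

/-!
With `k + 3 ≤ 15` colours there are fewer than `1000` ordered colour pairs, so two matching edges
`a_i b_i` and `a_j b_j` are coloured alike. The paths `b_i c b_j a_j` (and their variants) then
force `a_i, b_i, c, d` to get four distinct colours, and the paths `v a_i c a_j` keep the colours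
of `c, d` off the copies `H_{a_i}` and `H_{b_i}`. If some `u ∈ H_{a_i}` has the colour of `b_i`,
the path `u a_i b_i v` keeps the colour of `a_i` off `H_{b_i}`; otherwise `H_{a_i}` avoids it.
Either way one copy of `H` avoids four colours, giving a nonrepetitive `(k - 1)`-colouring of `H`.
-/

namespace Nonrepetitive

variable {V W α β : Type*} {G : SimpleGraph V} {c : V → α}

theorem of_comp {g : α → β} (h : Nonrepetitive G (g ∘ c)) : Nonrepetitive G c := by
  intro u v p hp w hw
  refine List.map_eq_nil_iff.mp (h u v p hp (w.map g) ?_)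
  rw [← List.map_map, hw, List.map_append]

theorem comp_of_injective (h : Nonrepetitive G c) {g : α → β} (hg : g.Injective) :
    Nonrepetitive G (g ∘ c) := by
  intro u v p
  have : Nonempty α := ⟨c u⟩
  refine of_comp (g := Function.invFun g) ?_ u v p
  rwa [← Function.comp_assoc, Function.invFun_comp hg, Function.id_comp]

theorem comp_hom {G' : SimpleGraph W} {c : W → α} (h : Nonrepetitive G' c) (f : G →g G')
    (hf : Function.Injective f) : Nonrepetitive G (c ∘ f) := by
  intro u v p hp w hw
  refine h _ _ (p.map f) (hp.map hf) w ?_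
  rwa [SimpleGraph.Walk.support_map, List.map_map]

theorem ne_of_adj (h : Nonrepetitive G c) {x y : V} (hxy : G.Adj x y) : c x ≠ c y := by
  intro he
  have := h x y (.cons hxy .nil) (by simp [hxy.ne]) [c x] (by simp [he])
  simp at this

theorem not_square_of_path {x₁ x₂ x₃ x₄ : V} (h : Nonrepetitive G c)
    (h₁₂ : G.Adj x₁ x₂) (h₂₃ : G.Adj x₂ x₃) (h₃₄ : G.Adj x₃ x₄)
    (h₁₃ : x₁ ≠ x₃) (h₁₄ : x₁ ≠ x₄) (h₂₄ : x₂ ≠ x₄) :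
    ¬ (c x₁ = c x₃ ∧ c x₂ = c x₄) := by
  rintro ⟨e₁₃, e₂₄⟩
  have := h x₁ x₄ (.cons h₁₂ (.cons h₂₃ (.cons h₃₄ .nil)))
    (by simp [h₁₂.ne, h₂₃.ne, h₃₄.ne, h₁₃, h₁₄, h₂₄])
    [c x₁, c x₂] (by simp [e₁₃, e₂₄])
  simp at this

theorem exists_fin_of_forall_notMem [Fintype α] {S : Finset α} {m : ℕ}
    (h : Nonrepetitive G c) (hS : ∀ v, c v ∉ S) (hm : Fintype.card α ≤ m + S.card) :
    ∃ c' : V → Fin m, Nonrepetitive G c' := by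
  classical
  let c₀ : V → {a // a ∉ S} := fun v => ⟨c v, hS v⟩
  have hc₀ : Nonrepetitive G c₀ := of_comp (g := Subtype.val) h
  obtain ⟨e⟩ := Function.Embedding.nonempty_of_card_le (α := {a // a ∉ S}) (β := Fin m)
    (by rw [Fintype.card_subtype_compl, Fintype.card_fin, Fintype.card_coe]; omega)
  exact ⟨e ∘ c₀, hc₀.comp_of_injective e.injective⟩

end Nonrepetitive

namespace plus4Graph

variable {VH : Type*} {H : SimpleGraph VH}

theorem adj_matching (i : Fin 1000) {b b' : Bool} (hb : b ≠ b') :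
    (plus4Graph H).Adj (.inl (i, b)) (.inl (i, b')) := by
  simp [plus4Graph, hb]

theorem adj_hub (x : Fin 1000 × Bool) (t : Fin 2) :
    (plus4Graph H).Adj (.inl x) (.inr (.inr t)) := by
  simp [plus4Graph]

theorem adj_copy_matching (x : Fin 1000 × Bool) (v : VH) :
    (plus4Graph H).Adj (.inr (.inl (x, v))) (.inl x) := by
  simp [plus4Graph]

theorem adj_hubs : (plus4Graph H).Adj (.inr (.inr 0)) (.inr (.inr 1)) := by
  simp [plus4Graph]

variable (H) in
def copyHom (x : Fin 1000 × Bool) : H →g plus4Graph H where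
  toFun v := .inr (.inl (x, v))
  map_rel' h := by simp [plus4Graph, h.ne, h]

theorem copyHom_injective (x : Fin 1000 × Bool) : Function.Injective (copyHom H x) :=
  Sum.inr_injective.comp (Sum.inl_injective.comp (Prod.mk_right_injective x))

variable {α : Type*} {φ : ((Fin 1000 × Bool) ⊕ (((Fin 1000 × Bool) × VH) ⊕ Fin 2)) → α}
  {i j : Fin 1000}

theorem hub_color_ne_matching (hφ : Nonrepetitive (plus4Graph H) φ) (hij : i ≠ j)
    (htwin : ∀ b, φ (.inl (i, b)) = φ (.inl (j, b))) (t : Fin 2) (b : Bool) :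
    φ (.inr (.inr t)) ≠ φ (.inl (i, b)) := fun h =>
  hφ.not_square_of_path (adj_hub (i, !b) t) (adj_hub (j, !b) t).symm
    (adj_matching j (by simp)) (by simp [hij]) (by simp [hij]) (by simp)
    ⟨htwin !b, h.trans (htwin b)⟩

theorem copy_color_ne_hub (hφ : Nonrepetitive (plus4Graph H) φ) (hij : i ≠ j) {b : Bool}
    (htwin : φ (.inl (i, b)) = φ (.inl (j, b))) (v : VH) (t : Fin 2) :
    φ (.inr (.inl ((i, b), v))) ≠ φ (.inr (.inr t)) := fun h =>
  hφ.not_square_of_path (adj_copy_matching (i, b) v) (adj_hub (i, b) t)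
    (adj_hub (j, b) t).symm (by simp) (by simp) (by simp [hij]) ⟨h, htwin⟩

theorem card_colors_eq_four [DecidableEq α] (hφ : Nonrepetitive (plus4Graph H) φ) (hij : i ≠ j)
    (htwin : ∀ b, φ (.inl (i, b)) = φ (.inl (j, b))) :
    ({φ (.inl (i, false)), φ (.inl (i, true)), φ (.inr (.inr 0)), φ (.inr (.inr 1))} :
      Finset α).card = 4 :=
  Finset.card_eq_four.mpr ⟨_, _, _, _, hφ.ne_of_adj (adj_matching i (by simp)),
    (hub_color_ne_matching hφ hij htwin 0 false).symm,
    (hub_color_ne_matching hφ hij htwin 1 false).symm,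
    (hub_color_ne_matching hφ hij htwin 0 true).symm,
    (hub_color_ne_matching hφ hij htwin 1 true).symm, hφ.ne_of_adj adj_hubs, rfl⟩

theorem exists_copy_avoiding_colors [DecidableEq α] (hφ : Nonrepetitive (plus4Graph H) φ)
    (hij : i ≠ j) (htwin : ∀ b, φ (.inl (i, b)) = φ (.inl (j, b))) :
    ∃ b, ∀ v, φ (.inr (.inl ((i, b), v))) ∉
      ({φ (.inl (i, false)), φ (.inl (i, true)), φ (.inr (.inr 0)), φ (.inr (.inr 1))} :
        Finset α) := by
  have avoids_hubs := fun b v t => copy_color_ne_hub (H := H) hφ hij (htwin b) v t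
  have avoids_own := fun b v => hφ.ne_of_adj (adj_copy_matching (H := H) (i, b) v)
  by_cases hu : ∃ u, φ (.inr (.inl ((i, false), u))) = φ (.inl (i, true))
  · obtain ⟨u, hu⟩ := hu
    have avoids_other : ∀ v, φ (.inr (.inl ((i, true), v))) ≠ φ (.inl (i, false)) :=
      fun v h => hφ.not_square_of_path (adj_copy_matching (i, false) u)
        (adj_matching i (by simp)) (adj_copy_matching (i, true) v).symm
        (by simp) (by simp) (by simp) ⟨hu, h.symm⟩
    refine ⟨true, fun v => ?_⟩
    simp [avoids_other v, avoids_own true v, avoids_hubs true v]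
  · push Not at hu
    refine ⟨false, fun v => ?_⟩
    simp [avoids_own false v, hu v, avoids_hubs false v]

end plus4Graph

theorem stmt_14_general {VH : Type*} (H : SimpleGraph VH) (k : ℕ)
    (hHmin : ¬ ∃ c : VH → Fin (k - 1), Nonrepetitive H c)
    (hbound : k + 3 ≤ 15) :
    ¬ ∃ c : (Fin 1000 × Bool) ⊕ (((Fin 1000 × Bool) × VH) ⊕ Fin 2) → Fin (k + 3),
      Nonrepetitive (plus4Graph H) c := by
  rintro ⟨φ, hφ⟩
  have few_pairs : Fintype.card (Bool → Fin (k + 3)) < Fintype.card (Fin 1000) := by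
    rw [Fintype.card_fun, Fintype.card_bool, Fintype.card_fin, Fintype.card_fin]
    nlinarith
  obtain ⟨i, j, hij, htwin⟩ :=
    Fintype.exists_ne_map_eq_of_card_lt (fun i b => φ (.inl (i, b))) few_pairs
  have htwin := congrFun htwin
  obtain ⟨b, hb⟩ := plus4Graph.exists_copy_avoiding_colors hφ hij htwin
  have hcopy := hφ.comp_hom _ (plus4Graph.copyHom_injective (i, b))
  refine hHmin (hcopy.exists_fin_of_forall_notMem hb ?_)
  rw [plus4Graph.card_colors_eq_four hφ hij htwin, Fintype.card_fin]
  omega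

/-- If `H` has nonrepetitive chromatic number `k` with `k + 3 ≤ 15`, then the
graph `G` constructed from `H` as in Lemma `plus4` satisfies `π(G) ≥ k + 4`,
i.e. `G` admits no nonrepetitive coloring with `k + 3` colors. -/
theorem stmt_14 {VH : Type*} (H : SimpleGraph VH) (k : ℕ) (hk : 1 ≤ k)
    (hH : ∃ c : VH → Fin k, Nonrepetitive H c)
    (hHmin : ¬ ∃ c : VH → Fin (k - 1), Nonrepetitive H c)
    (hbound : k + 3 ≤ 15) :
    ¬ ∃ c : (Fin 1000 × Bool) ⊕ (((Fin 1000 × Bool) × VH) ⊕ Fin 2) → Fin (k + 3),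
      Nonrepetitive (plus4Graph H) c :=
  stmt_14_general H k hHmin hbound
end
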